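/- arXiv:math/0504079 — 3 statements merged into one kernel-verified Lean document; each statement's English description precedes it below -/
import Mathlib

section
/- Let n ≥ 3, let X_u, X_v ∈ ℝⁿ satisfy |X_u|² = |X_v|² = W, X_u·X_v = 0 with W > 0, and let ω ∈ (0, π/2]. Suppose that every unit vector N ∈ ℝⁿ orthogonal to both X_u and X_v satisfies |N·e_1| ≤ cos ω, where e_1 = (1,0,…,0). Then (X_u·e_1)² + (X_v·e_1)² ≥ W sin²ω. -/
/-! Split `e₁` orthogonally along the plane `K = span {X_u, X_v}`. As `X_u, X_v` are orthogonal
of squared length `W`, the tangential part has squared length `((X_u·e₁)² + (X_v·e₁)²) / W`. The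
normal part `P` is `‖P‖` times a unit normal `N` with `N·e₁ = ‖P‖`, so `‖P‖ ≤ cos ω`, and
Pythagoras `1 = ‖tangential part‖² + ‖P‖²` gives the inequality. -/
open scoped RealInnerProductSpace
open Real

noncomputable section

abbrev E (n : ℕ) : Type := EuclideanSpace ℝ (Fin n)

namespace Submodule

theorem IsOrtho.starProjection_sup {𝕜 F : Type*} [RCLike 𝕜] [NormedAddCommGroup F]
    [InnerProductSpace 𝕜 F] {K₁ K₂ : Submodule 𝕜 F} [K₁.HasOrthogonalProjection]
    [K₂.HasOrthogonalProjection] [(K₁ ⊔ K₂).HasOrthogonalProjection] (h : K₁ ⟂ K₂) (v : F) :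
    (K₁ ⊔ K₂).starProjection v = K₁.starProjection v + K₂.starProjection v := by
  refine eq_starProjection_of_mem_orthogonal
    (add_mem_sup (K₁.starProjection_apply_mem v) (K₂.starProjection_apply_mem v)) ?_
  rw [← inf_orthogonal]
  constructor
  · rw [sub_add_eq_sub_sub]
    exact sub_mem (sub_starProjection_mem_orthogonal v)
      (isOrtho_iff_le.1 h.symm (K₂.starProjection_apply_mem v))
  · rw [sub_add_eq_sub_sub_swap]
    exact sub_mem (sub_starProjection_mem_orthogonal v)
      (isOrtho_iff_le.1 h (K₁.starProjection_apply_mem v))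

variable {F : Type*} [NormedAddCommGroup F] [InnerProductSpace ℝ F]

theorem norm_sq_starProjection_span_singleton (x v : F) :
    ‖(ℝ ∙ x).starProjection v‖ ^ 2 = ⟪x, v⟫ ^ 2 / ‖x‖ ^ 2 := by
  rcases eq_or_ne x 0 with rfl | hx
  · simp
  rw [starProjection_singleton, RCLike.ofReal_real_eq_id, id, norm_smul, mul_pow,
    Real.norm_eq_abs, sq_abs]
  field_simp [norm_ne_zero_iff.2 hx]

theorem norm_sq_starProjection_span_pair {x y : F} (hxy : ⟪x, y⟫ = 0) (v : F) :
    ‖(ℝ ∙ x ⊔ ℝ ∙ y).starProjection v‖ ^ 2 = ⟪x, v⟫ ^ 2 / ‖x‖ ^ 2 + ⟪y, v⟫ ^ 2 / ‖y‖ ^ 2 := by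
  have hortho : (ℝ ∙ x) ⟂ (ℝ ∙ y) := by
    rw [isOrtho_span]
    rintro _ rfl _ rfl
    exact hxy
  rw [hortho.starProjection_sup, norm_add_sq_real,
    hortho.inner_eq (starProjection_apply_mem _ v) (starProjection_apply_mem _ v),
    norm_sq_starProjection_span_singleton, norm_sq_starProjection_span_singleton]
  ring

theorem mem_orthogonal_span_pair_iff {x y N : F} :
    N ∈ (ℝ ∙ x ⊔ ℝ ∙ y)ᗮ ↔ ⟪N, x⟫ = 0 ∧ ⟪N, y⟫ = 0 := by
  rw [← inf_orthogonal, mem_inf, mem_orthogonal_singleton_iff_inner_left,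
    mem_orthogonal_singleton_iff_inner_left]

theorem norm_sq_starProjection_le_of_abs_inner_le (K : Submodule ℝ F) [K.HasOrthogonalProjection]
    {v : F} {c : ℝ} (h : ∀ N ∈ K, ‖N‖ = 1 → |⟪N, v⟫| ≤ c) :
    ‖K.starProjection v‖ ^ 2 ≤ c ^ 2 := by
  set P := K.starProjection v
  rcases eq_or_ne P 0 with hP | hP
  · simp [hP, sq_nonneg]
  have hPpos : 0 < ‖P‖ := norm_pos_iff.2 hP
  have hPv : ⟪P, v⟫ = ‖P‖ ^ 2 :=
    calc ⟪P, v⟫ = ⟪K.starProjection P, v⟫ := by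
          rw [starProjection_eq_self_iff.2 (K.starProjection_apply_mem v)]
      _ = ‖P‖ ^ 2 := by rw [K.inner_starProjection_left_eq_right, real_inner_self_eq_norm_sq]
  have hle : ‖P‖ ≤ c := by
    have := h (‖P‖⁻¹ • P) (K.smul_mem _ (K.starProjection_apply_mem v))
      (by rw [norm_smul, norm_inv, norm_norm, inv_mul_cancel₀ hPpos.ne'])
    rwa [real_inner_smul_left, hPv, sq, inv_mul_cancel_left₀ hPpos.ne', abs_of_pos hPpos] at this
  exact pow_le_pow_left₀ hPpos.le hle 2

end Submodule

/-- **Osserman-type interpolation inequality.** If `X_u, X_v` span a conformal tangent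
plane with area element `W > 0` and every unit normal `N` makes an angle of at least `ω`
with the `x¹`-axis (i.e. `|N·e₁| ≤ cos ω`), then `(X_u·e₁)² + (X_v·e₁)² ≥ W sin²ω`. -/
theorem osserman_interpolation
    (n : ℕ) (hn : 3 ≤ n)
    (Xu Xv : E n) (W : ℝ) (hW : 0 < W)
    (hXu : ⟪Xu, Xu⟫ = W) (hXv : ⟪Xv, Xv⟫ = W) (hXuXv : ⟪Xu, Xv⟫ = 0)
    (ω : ℝ)
    (e₁ : E n) (he₁ : e₁ = EuclideanSpace.single (⟨0, by omega⟩ : Fin n) 1)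
    (hnormal : ∀ N : E n, ‖N‖ = 1 → ⟪N, Xu⟫ = 0 → ⟪N, Xv⟫ = 0 →
      |⟪N, e₁⟫| ≤ Real.cos ω) :
    W * Real.sin ω ^ 2 ≤ ⟪Xu, e₁⟫ ^ 2 + ⟪Xv, e₁⟫ ^ 2 := by
  set K := ℝ ∙ Xu ⊔ ℝ ∙ Xv
  have hpyth := K.norm_sq_eq_add_norm_sq_starProjection e₁
  have hplane : ‖K.starProjection e₁‖ ^ 2 = (⟪Xu, e₁⟫ ^ 2 + ⟪Xv, e₁⟫ ^ 2) / W := by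
    rw [Submodule.norm_sq_starProjection_span_pair hXuXv, ← real_inner_self_eq_norm_sq,
      ← real_inner_self_eq_norm_sq, hXu, hXv, add_div]
  have hnormal_part : ‖Kᗮ.starProjection e₁‖ ^ 2 ≤ Real.cos ω ^ 2 :=
    Kᗮ.norm_sq_starProjection_le_of_abs_inner_le fun N hN hN1 =>
      (Submodule.mem_orthogonal_span_pair_iff.1 hN).elim (hnormal N hN1)
  have he₁_norm : ‖e₁‖ = 1 := by simp [he₁]
  rw [he₁_norm, hplane] at hpyth
  rw [← le_div_iff₀' hW]
  linarith [sin_sq_add_cos_sq ω]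
end
end

section
/- Let X = (x¹,…,x⁴) : B → ℝ⁴ be a C² conformally parametrized immersion with area element W satisfying |ΔX(w)| ≤ 4 h_0 W(w) on B for a constant h_0 ≥ 0, and suppose |∇x¹(w)|² ≥ W(w) sin²ω on B for some ω ∈ (0, π/2]. Let F*(w) = (x¹(w), x²(w)) denote the associated plane mapping. Then for all w ∈ B: (i) |ΔF*(w)| ≤ (4 h_0 / sin²ω) |∇F*(w)|², and (ii) |∇X(w)|² ≤ (2 / sin²ω) |∇F*(w)|². -/
/-!
The plane mapping is `F* = P ∘ X` for the orthogonal projection `P : ℝ⁴ → ℝ²` onto the first two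
coordinates. Being linear, `P` commutes with partial derivatives, so `∇F* = P ∇X` and
`ΔF* = P ΔX`; being a contraction, it gives `|ΔF*| ≤ |ΔX| ≤ 4h₀W`. Since `x¹` is a coordinate of
`F*`, the angle condition yields `W sin²ω ≤ |∇x¹|² ≤ |∇F*|²`, and both estimates follow by
substituting `W ≤ |∇F*|² / sin²ω` into `|ΔX| ≤ 4h₀W` and `|∇X|² = 2W`.
-/

open scoped RealInnerProductSpace
open Metric Real Filter Topology

noncomputable section

abbrev E2 : Type := EuclideanSpace ℝ (Fin 2)
abbrev E4 : Type := EuclideanSpace ℝ (Fin 4)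

/-- Partial derivative of a map defined on `ℝ²` in the `i`-th coordinate direction. -/
def pd {F : Type*} [NormedAddCommGroup F] [NormedSpace ℝ F]
    (X : E2 → F) (i : Fin 2) (w : E2) : F :=
  fderiv ℝ X w (EuclideanSpace.single i 1)

/-- Second partial derivative. -/
def pd2 {F : Type*} [NormedAddCommGroup F] [NormedSpace ℝ F]
    (X : E2 → F) (i j : Fin 2) (w : E2) : F :=
  pd (pd X i) j w

/-- Partial derivative of a scalar function on `ℝ²`. -/
def pdR (f : E2 → ℝ) (i : Fin 2) (w : E2) : ℝ :=
  fderiv ℝ f w (EuclideanSpace.single i 1)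

section PartialDerivatives

variable {F G : Type*} [NormedAddCommGroup F] [NormedSpace ℝ F]
  [NormedAddCommGroup G] [NormedSpace ℝ G]

lemma pd_clm_comp (L : F →L[ℝ] G) {X : E2 → F} {w : E2} (hX : DifferentiableAt ℝ X w)
    (i : Fin 2) : pd (fun z => L (X z)) i w = L (pd X i w) := by
  change fderiv ℝ (L ∘ X) w _ = _
  rw [(L.hasFDerivAt.comp w hX.hasFDerivAt).fderiv]
  rfl

lemma pd2_clm_comp (L : F →L[ℝ] G) {X : E2 → F} {w : E2}
    (hX : ∀ᶠ z in 𝓝 w, DifferentiableAt ℝ X z) {i : Fin 2}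
    (hXi : DifferentiableAt ℝ (pd X i) w) (j : Fin 2) :
    pd2 (fun z => L (X z)) i j w = L (pd2 X i j w) := by
  have hpd : pd (fun z => L (X z)) i =ᶠ[𝓝 w] fun z => L (pd X i z) :=
    hX.mono fun z hz => pd_clm_comp L hz i
  simp only [pd2, pd, hpd.fderiv_eq]
  exact pd_clm_comp L hXi j

lemma pdR_coord_eq_pd_apply {n : Type*} [Fintype n] {X : E2 → EuclideanSpace ℝ n} {w : E2}
    (hX : DifferentiableAt ℝ X w) (k : n) (i : Fin 2) :
    pdR (fun z => X z k) i w = pd X i w k :=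
  pd_clm_comp (EuclideanSpace.proj k) hX i

lemma ContDiffOn.differentiableAt_pd {X : E2 → F} {U : Set E2} (hU : IsOpen U)
    (hX : ContDiffOn ℝ 2 X U) {w : E2} (hw : w ∈ U) (i : Fin 2) :
    DifferentiableAt ℝ (pd X i) w :=
  (((hX.fderiv_of_isOpen hU (by norm_num)).clm_apply contDiffOn_const).contDiffAt
    (hU.mem_nhds hw)).differentiableAt one_ne_zero

end PartialDerivatives

/-- The orthogonal projection `(y₁, y₂, y₃, y₄) ↦ (y₁, y₂)`. -/
def planeProj : E4 →L[ℝ] E2 :=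
  (EuclideanSpace.equiv (Fin 2) ℝ).symm.toContinuousLinearMap.comp
    (ContinuousLinearMap.pi fun i : Fin 2 => EuclideanSpace.proj (i.castLE (by norm_num)))

lemma norm_planeProj_sq (y : E4) : ‖planeProj y‖ ^ 2 = y 0 ^ 2 + y 1 ^ 2 := by
  rw [EuclideanSpace.real_norm_sq_eq, Fin.sum_univ_two]
  rfl

lemma sq_apply_zero_le_norm_planeProj_sq (y : E4) : y 0 ^ 2 ≤ ‖planeProj y‖ ^ 2 := by
  rw [norm_planeProj_sq]
  nlinarith [sq_nonneg (y 1)]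

lemma norm_planeProj_le (y : E4) : ‖planeProj y‖ ≤ ‖y‖ := by
  refine (pow_le_pow_iff_left₀ (norm_nonneg _) (norm_nonneg _) two_ne_zero).1 ?_
  rw [norm_planeProj_sq, EuclideanSpace.real_norm_sq_eq, Fin.sum_univ_four]
  nlinarith [sq_nonneg (y 2), sq_nonneg (y 3)]

lemma mul_le_div_mul_of_mul_le {c W s G : ℝ} (hc : 0 ≤ c) (hs : 0 < s) (hWG : W * s ≤ G) :
    c * W ≤ c / s * G := by
  rw [div_mul_eq_mul_div, le_div_iff₀ hs, mul_assoc]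
  exact mul_le_mul_of_nonneg_left hWG hc

/-- Estimates for the plane mapping `F* = (x¹, x²)` of a conformally parametrized
surface in `ℝ⁴` with `|ΔX| ≤ 4h₀W` whose normals make an angle at least `ω` with the
`x¹`-axis: (i) `|ΔF*| ≤ (4h₀/sin²ω)|∇F*|²` and (ii) `|∇X|² ≤ (2/sin²ω)|∇F*|²`. -/
theorem plane_mapping_estimates
    (X : E2 → E4)
    (hX : ContDiffOn ℝ 2 X (ball (0 : E2) 1))
    (W : E2 → ℝ)
    (hconf : ∀ w ∈ ball (0 : E2) 1,
      ⟪pd X 0 w, pd X 0 w⟫ = W w ∧ ⟪pd X 1 w, pd X 1 w⟫ = W w ∧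
      ⟪pd X 0 w, pd X 1 w⟫ = 0 ∧ 0 < W w)
    (h₀ : ℝ) (hh₀ : 0 ≤ h₀)
    (hΔX : ∀ w ∈ ball (0 : E2) 1,
      ‖pd2 X 0 0 w + pd2 X 1 1 w‖ ≤ 4 * h₀ * W w)
    (ω : ℝ) (hω : ω ∈ Set.Ioc 0 (π / 2))
    (hOsserman : ∀ w ∈ ball (0 : E2) 1,
      W w * Real.sin ω ^ 2 ≤
        pdR (fun w' => X w' 0) 0 w ^ 2 + pdR (fun w' => X w' 0) 1 w ^ 2)
    (F : E2 → E2)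
    (hFdef : ∀ w, F w = (WithLp.equiv 2 (Fin 2 → ℝ)).symm ![X w 0, X w 1]) :
    ∀ w ∈ ball (0 : E2) 1,
      ‖pd2 F 0 0 w + pd2 F 1 1 w‖ ≤
          (4 * h₀ / Real.sin ω ^ 2) * (‖pd F 0 w‖ ^ 2 + ‖pd F 1 w‖ ^ 2) ∧
      ‖pd X 0 w‖ ^ 2 + ‖pd X 1 w‖ ^ 2 ≤
          (2 / Real.sin ω ^ 2) * (‖pd F 0 w‖ ^ 2 + ‖pd F 1 w‖ ^ 2) := by
  obtain rfl : F = fun z => planeProj (X z) := funext fun z => by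
    rw [hFdef]; ext i; fin_cases i <;> rfl
  intro w hw
  have hsin : 0 < Real.sin ω ^ 2 := pow_pos (Real.sin_pos_of_pos_of_lt_pi hω.1
    (hω.2.trans_lt (by linarith [Real.pi_pos]))) 2
  have hXdiff : ∀ᶠ z in 𝓝 w, DifferentiableAt ℝ X z :=
    eventually_of_mem (isOpen_ball.mem_nhds hw) fun z hz =>
      (hX.contDiffAt (isOpen_ball.mem_nhds hz)).differentiableAt (by norm_num)
  have hXw : DifferentiableAt ℝ X w := hXdiff.self_of_nhds
  obtain ⟨hW0, hW1, -, -⟩ := hconf w hw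
  have hgrad : W w * Real.sin ω ^ 2 ≤ ‖pd (fun z => planeProj (X z)) 0 w‖ ^ 2 +
      ‖pd (fun z => planeProj (X z)) 1 w‖ ^ 2 := by
    have h := hOsserman w hw
    rw [pdR_coord_eq_pd_apply hXw, pdR_coord_eq_pd_apply hXw] at h
    rw [pd_clm_comp _ hXw, pd_clm_comp _ hXw]
    linarith [sq_apply_zero_le_norm_planeProj_sq (pd X 0 w),
      sq_apply_zero_le_norm_planeProj_sq (pd X 1 w)]
  refine ⟨?_, ?_⟩
  · rw [pd2_clm_comp _ hXdiff (hX.differentiableAt_pd isOpen_ball hw 0),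
      pd2_clm_comp _ hXdiff (hX.differentiableAt_pd isOpen_ball hw 1), ← map_add]
    calc _ ≤ 4 * h₀ * W w := (norm_planeProj_le _).trans (hΔX w hw)
      _ ≤ _ := mul_le_div_mul_of_mul_le (by positivity) hsin hgrad
  · rw [← real_inner_self_eq_norm_sq, ← real_inner_self_eq_norm_sq, hW0, hW1, ← two_mul]
    exact mul_le_div_mul_of_mul_le zero_le_two hsin hgrad
end
end

section
/- Let f : B → (0,∞), let ν_0 ∈ (0, 1/2], set ν = ν_0/2, and let c_4, c_5 > 0. Assume: (i) for every a ∈ ℝ² with |a| < 1 − ν_0 and every w ∈ B_ν(a) one has c_4 f(w)⁵ ≤ f(a); (ii) there exists w* with |w*| < 1 − ν_0 and f(w*) ≥ c_5. Then there exists a constant C_1 > 0 depending only on c_4, c_5 and ν_0 (explicitly, C_1 = c_4^{1+5+5²+…+5^{n−1}} c_5^{5ⁿ} for any integer n with 1 − 2ν ≤ nν/2 ≤ 1 − ν) such that f(w) ≥ C_1 for all w ∈ B_{1/2}(0,0). -/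
/-! Walk from `w` to the point `w*` where `f ≥ c₅` in `n` equal steps of length `< ν` along the
segment, which stays in the convex ball `|a| < 1 − ν₀` where the Harnack inequality holds. Each step
turns a lower bound `t` at the far end into `c₄ t⁵` at the near end, so after `n` steps the bound is
the `n`-th iterate of `t ↦ c₄ t⁵` started at `c₅`, namely `c₄^{1+5+…+5^{n−1}} c₅^{5ⁿ}`. Since
`|w − w*| < 1/2 + 1 − 2ν ≤ 2(1 − 2ν) ≤ nν`, `n` steps suffice. -/

open Metric Real

noncomputable section

def chainBound (c d : ℝ) (p n : ℕ) : ℝ := c ^ (∑ j ∈ Finset.range n, p ^ j) * d ^ p ^ n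

lemma chainBound_zero (c d : ℝ) (p : ℕ) : chainBound c d p 0 = d := by
  simp [chainBound]

lemma chainBound_succ (c d : ℝ) (p n : ℕ) :
    chainBound c d p (n + 1) = c * chainBound c d p n ^ p := by
  simp only [chainBound, geom_sum_succ, mul_pow, ← pow_mul, pow_succ]
  ring

lemma chainBound_nonneg {c d : ℝ} (hc : 0 ≤ c) (hd : 0 ≤ d) (p n : ℕ) :
    0 ≤ chainBound c d p n := by
  unfold chainBound; positivity

lemma chainBound_pos {c d : ℝ} (hc : 0 < c) (hd : 0 < d) (p n : ℕ) :
    0 < chainBound c d p n := by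
  unfold chainBound; positivity

lemma chainBound_le_of_pow_le {c d : ℝ} (hc : 0 ≤ c) (hd : 0 ≤ d) {p : ℕ} :
    ∀ {n : ℕ} {x : ℕ → ℝ}, (∀ k < n, c * x (k + 1) ^ p ≤ x k) → d ≤ x n →
      chainBound c d p n ≤ x 0
  | 0, _, _, hend => by rwa [chainBound_zero]
  | n + 1, x, hstep, hend => by
    have ih : chainBound c d p n ≤ x 1 :=
      chainBound_le_of_pow_le hc hd (x := fun k => x (k + 1))
        (fun k hk => hstep (k + 1) (by omega)) hend
    calc chainBound c d p (n + 1) = c * chainBound c d p n ^ p := chainBound_succ c d p n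
      _ ≤ c * x 1 ^ p := by gcongr; exact chainBound_nonneg hc hd p n
      _ ≤ x 0 := hstep 0 n.succ_pos

lemma chainBound_le_of_convex {E : Type*} [NormedAddCommGroup E] [NormedSpace ℝ E]
    {f : E → ℝ} {s : Set E} (hs : Convex ℝ s) {c d ν : ℝ} {p n : ℕ} (hc : 0 ≤ c) (hd : 0 ≤ d)
    (hstep : ∀ a ∈ s, ∀ w ∈ ball a ν, c * f w ^ p ≤ f a)
    {w w' : E} (hw : w ∈ s) (hw' : w' ∈ s) (hfw' : d ≤ f w') (hdist : dist w w' < n * ν) :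
    chainBound c d p n ≤ f w := by
  have hnν : 0 < n * ν := dist_nonneg.trans_lt hdist
  have hn : (0 : ℝ) < n := pos_of_mul_pos_left hnν (pos_of_mul_pos_right hnν n.cast_nonneg).le
  set A : ℕ → E := fun k => AffineMap.lineMap w w' ((k : ℝ) / n)
  have hA : ∀ k ≤ n, A k ∈ s := fun k hk =>
    hs.lineMap_mem hw hw' ⟨by positivity, div_le_one_of_le₀ (by exact_mod_cast hk) hn.le⟩
  have hA_succ : ∀ k, dist (A (k + 1)) (A k) < ν := by
    intro k
    simp only [A, dist_lineMap_lineMap]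
    rw [Real.dist_eq, Nat.cast_succ, ← sub_div, add_sub_cancel_left, abs_of_pos (by positivity),
      div_mul_eq_mul_div, one_mul, div_lt_iff₀' hn]
    exact hdist
  have hA_last : A n = w' := by simp [A, hn.ne']
  simpa [A] using chainBound_le_of_pow_le hc hd (x := f ∘ A)
    (fun k hk => hstep _ (hA k hk.le) _ (hA_succ k)) (by rwa [Function.comp_apply, hA_last])

lemma exists_nat_mul_mem_Icc {a h : ℝ} (ha : 0 ≤ a) (hh : 0 < h) :
    ∃ n : ℕ, a ≤ n * h ∧ n * h ≤ a + h := by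
  refine ⟨⌈a / h⌉₊, (div_le_iff₀ hh).mp (Nat.le_ceil _), ?_⟩
  calc ⌈a / h⌉₊ * h ≤ (a / h + 1) * h := by
        gcongr; exact (Nat.ceil_lt_add_one (div_nonneg ha hh.le)).le
    _ = a + h := by field_simp

theorem harnack_chain_lower_bound_general
    (f : E2 → ℝ)
    (ν₀ : ℝ) (hν₀ : ν₀ ∈ Set.Ioc (0 : ℝ) (1 / 2))
    (ν : ℝ) (hν : ν = ν₀ / 2)
    (c₄ c₅ : ℝ) (hc₄ : 0 < c₄) (hc₅ : 0 < c₅)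
    (hchain : ∀ a : E2, ‖a‖ < 1 - ν₀ → ∀ w ∈ ball a ν, c₄ * f w ^ 5 ≤ f a)
    (hpoint : ∃ wstar : E2, ‖wstar‖ < 1 - ν₀ ∧ c₅ ≤ f wstar) :
    (∀ n : ℕ, 1 - 2 * ν ≤ n * ν / 2 → n * ν / 2 ≤ 1 - ν →
        ∀ w ∈ ball (0 : E2) (1 / 2),
          c₄ ^ (∑ j ∈ Finset.range n, 5 ^ j) * c₅ ^ 5 ^ n ≤ f w) ∧
      ∃ C₁ : ℝ, 0 < C₁ ∧
        (∃ n : ℕ, 1 - 2 * ν ≤ n * ν / 2 ∧ n * ν / 2 ≤ 1 - ν ∧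
          C₁ = c₄ ^ (∑ j ∈ Finset.range n, 5 ^ j) * c₅ ^ 5 ^ n) ∧
        ∀ w ∈ ball (0 : E2) (1 / 2), C₁ ≤ f w := by
  obtain ⟨hν₀_pos, hν₀_le⟩ := hν₀
  obtain ⟨w', hw', hfw'⟩ := hpoint
  have lower_bound : ∀ n : ℕ, 1 - 2 * ν ≤ n * ν / 2 → ∀ w ∈ ball (0 : E2) (1 / 2),
      chainBound c₄ c₅ 5 n ≤ f w := by
    intro n hn w hw
    rw [mem_ball_zero_iff] at hw
    refine chainBound_le_of_convex (convex_ball 0 (1 - ν₀)) hc₄.le hc₅.le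
      (fun a ha => hchain a (mem_ball_zero_iff.mp ha)) (mem_ball_zero_iff.mpr (by linarith))
      (mem_ball_zero_iff.mpr hw') hfw' ?_
    calc dist w w' ≤ ‖w‖ + ‖w'‖ := dist_le_norm_add_norm w w'
      _ < n * ν := by linarith
  obtain ⟨n, hn₁, hn₂⟩ := exists_nat_mul_mem_Icc (a := 1 - 2 * ν) (h := ν / 2) (by linarith)
    (by linarith)
  rw [← mul_div_assoc] at hn₁ hn₂
  exact ⟨fun n hn _ => lower_bound n hn, _, chainBound_pos hc₄ hc₅ 5 n, ⟨n, hn₁, by linarith, rfl⟩,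
    lower_bound n hn₁⟩

/-- **Iteration of the Harnack inequality.** If `c₄ f(w)⁵ ≤ f(a)` whenever
`|a| < 1 − ν₀` and `w ∈ B_ν(a)` (with `ν = ν₀/2`), and `f(w*) ≥ c₅` for some point
`w*` with `|w*| < 1 − ν₀`, then `f ≥ C₁ > 0` on `B_{1/2}(0)`, where
`C₁ = c₄^{1+5+…+5^{n−1}} c₅^{5ⁿ}` for any integer `n` with `1−2ν ≤ nν/2 ≤ 1−ν`. -/
theorem harnack_chain_lower_bound
    (f : E2 → ℝ) (hf : ∀ w ∈ ball (0 : E2) 1, 0 < f w)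
    (ν₀ : ℝ) (hν₀ : ν₀ ∈ Set.Ioc (0 : ℝ) (1 / 2))
    (ν : ℝ) (hν : ν = ν₀ / 2)
    (c₄ c₅ : ℝ) (hc₄ : 0 < c₄) (hc₅ : 0 < c₅)
    (hchain : ∀ a : E2, ‖a‖ < 1 - ν₀ → ∀ w ∈ ball a ν, c₄ * f w ^ 5 ≤ f a)
    (hpoint : ∃ wstar : E2, ‖wstar‖ < 1 - ν₀ ∧ c₅ ≤ f wstar) :
    (∀ n : ℕ, 1 - 2 * ν ≤ n * ν / 2 → n * ν / 2 ≤ 1 - ν →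
        ∀ w ∈ ball (0 : E2) (1 / 2),
          c₄ ^ (∑ j ∈ Finset.range n, 5 ^ j) * c₅ ^ 5 ^ n ≤ f w) ∧
      ∃ C₁ : ℝ, 0 < C₁ ∧
        (∃ n : ℕ, 1 - 2 * ν ≤ n * ν / 2 ∧ n * ν / 2 ≤ 1 - ν ∧
          C₁ = c₄ ^ (∑ j ∈ Finset.range n, 5 ^ j) * c₅ ^ 5 ^ n) ∧
        ∀ w ∈ ball (0 : E2) (1 / 2), C₁ ≤ f w :=
  harnack_chain_lower_bound_general f ν₀ hν₀ ν hν c₄ c₅ hc₄ hc₅ hchain hpoint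
end
end
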